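/- Let f : [0,1] → ℝ be continuous and let a > −π². Then for every x ∈ [0,1] the function t ↦ e^{−a·t}·u1(x,t) is Lebesgue integrable on [0,∞), and there is a constant C (independent of x, e.g. C = 2‖f‖_∞·Σ_{n=1}^∞ 1/(n²π²+a)) bounding ∫_0^∞ e^{−a·t}|u1(x,t)| dt uniformly in x ∈ [0,1]. -/

import Mathlib

/-!
The `n`-th mode of `e^{-at} u1 f x t` is bounded by `2 ‖f‖_∞ e^{-(n²π² + a) t}`, whose integral
over `(0, ∞)` is `2 ‖f‖_∞ / (n²π² + a)`; since `a > -π²` these are summable. So the series has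
summable `L¹` norms, hence (completeness of `L¹`) converges in `L¹` to an integrable function
whose `L¹` norm is at most the sum of the norms of its terms.
-/

open MeasureTheory Set
open scoped Real

/-- `u1 f x t = 2 Σ_{n=1}^∞ (∫_0^1 f(y) sin(nπy) dy) e^{−n²π²t} sin(nπx)`. -/
noncomputable def u1 (f : ℝ → ℝ) (x t : ℝ) : ℝ :=
  2 * ∑' n : ℕ,
    (∫ y in (0:ℝ)..1, f y * Real.sin (((n : ℝ) + 1) * π * y)) *
      Real.exp (-(((n : ℝ) + 1) ^ 2) * π ^ 2 * t) * Real.sin (((n : ℝ) + 1) * π * x)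

namespace MeasureTheory

variable {α ι E : Type*} [MeasurableSpace α] {μ : Measure α} [NormedAddCommGroup E]
  [Countable ι] {F : ι → α → E}

theorem ae_summable_norm_of_summable_integral_norm (hF : ∀ i, Integrable (F i) μ)
    (hs : Summable fun i ↦ ∫ a, ‖F i a‖ ∂μ) : ∀ᵐ a ∂μ, Summable fun i ↦ ‖F i a‖ := by
  refine summable_norm_of_tsum_eLpNorm_ne_top le_rfl (fun i ↦ (hF i).1) ?_
  simp_rw [eLpNorm_one_eq_lintegral_enorm, ← fun i ↦ ofReal_integral_norm_eq_lintegral_enorm (hF i),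
    ← ENNReal.ofReal_tsum_of_nonneg (fun i ↦ integral_nonneg fun a ↦ norm_nonneg (F i a)) hs]
  exact ENNReal.ofReal_ne_top

theorem integrable_tsum_of_summable_integral_norm [CompleteSpace E]
    (hF : ∀ i, Integrable (F i) μ) (hs : Summable fun i ↦ ∫ a, ‖F i a‖ ∂μ) :
    Integrable (fun a ↦ ∑' i, F i a) μ := by
  have h_enorm : ∑' i, ‖(hF i).toL1 (F i)‖ₑ ≠ ⊤ := by
    simp_rw [← ofReal_norm, L1.norm_of_fun_eq_integral_norm,
      ← ENNReal.ofReal_tsum_of_nonneg (fun i ↦ integral_nonneg fun a ↦ norm_nonneg (F i a)) hs]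
    exact ENNReal.ofReal_ne_top
  refine (L1.integrable_coeFn (∑' i, (hF i).toL1 (F i))).congr ?_
  filter_upwards [Lp.coeFn_tsum h_enorm, ae_all_iff.2 fun i ↦ (hF i).coeFn_toL1] with a ha hi
  rw [ha]
  exact tsum_congr hi

theorem integral_norm_tsum_le_tsum_integral_norm (hF : ∀ i, Integrable (F i) μ)
    (hs : Summable fun i ↦ ∫ a, ‖F i a‖ ∂μ) :
    ∫ a, ‖∑' i, F i a‖ ∂μ ≤ ∑' i, ∫ a, ‖F i a‖ ∂μ := by
  have hF' : ∀ i, Integrable (fun a ↦ ‖F i a‖) μ := fun i ↦ (hF i).norm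
  have hs' : Summable fun i ↦ ∫ a, ‖‖F i a‖‖ ∂μ := by simpa only [norm_norm] using hs
  rw [integral_tsum_of_summable_integral_norm hF' hs']
  refine integral_mono_of_nonneg (.of_forall fun a ↦ norm_nonneg _)
    (integrable_tsum_of_summable_integral_norm hF' hs') ?_
  filter_upwards [ae_summable_norm_of_summable_integral_norm hF hs] with a ha
  exact norm_tsum_le_tsum_norm ha

end MeasureTheory

section ExpSeries

variable {c r : ℕ → ℝ} {M : ℝ}

theorem integrableOn_mul_exp_neg_mul (b : ℝ) {s : ℝ} (hs : 0 < s) :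
    IntegrableOn (fun t ↦ b * Real.exp (-s * t)) (Ioi 0) :=
  (exp_neg_integrableOn_Ioi 0 hs).const_mul b

theorem integral_norm_mul_exp_neg_mul (b : ℝ) {s : ℝ} (hs : 0 < s) :
    ∫ t in Ioi (0 : ℝ), ‖b * Real.exp (-s * t)‖ = |b| / s := by
  have h_exp : ∫ t in Ioi (0 : ℝ), Real.exp (-s * t) = 1 / s := by
    rw [integral_exp_mul_Ioi (neg_lt_zero.2 hs), mul_zero, Real.exp_zero, neg_div_neg_eq]
  simp_rw [norm_mul, Real.norm_eq_abs, Real.abs_exp, integral_const_mul, h_exp]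
  ring

theorem integral_norm_mul_exp_neg_mul_le {b s : ℝ} (hb : |b| ≤ M) (hs : 0 < s) :
    ∫ t in Ioi (0 : ℝ), ‖b * Real.exp (-s * t)‖ ≤ M * (1 / s) := by
  rw [integral_norm_mul_exp_neg_mul b hs, mul_one_div]
  exact div_le_div_of_nonneg_right hb hs.le

theorem summable_integral_norm_mul_exp_neg_mul (hc : ∀ n, |c n| ≤ M) (hr : ∀ n, 0 < r n)
    (hr_sum : Summable fun n ↦ 1 / r n) :
    Summable fun n ↦ ∫ t in Ioi (0 : ℝ), ‖c n * Real.exp (-r n * t)‖ :=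
  (hr_sum.mul_left M).of_nonneg_of_le (fun _ ↦ integral_nonneg fun _ ↦ norm_nonneg _)
    fun n ↦ integral_norm_mul_exp_neg_mul_le (hc n) (hr n)

theorem integrableOn_tsum_mul_exp_neg_mul (hc : ∀ n, |c n| ≤ M) (hr : ∀ n, 0 < r n)
    (hr_sum : Summable fun n ↦ 1 / r n) :
    IntegrableOn (fun t ↦ ∑' n, c n * Real.exp (-r n * t)) (Ioi 0) :=
  integrable_tsum_of_summable_integral_norm (fun n ↦ integrableOn_mul_exp_neg_mul (c n) (hr n))
    (summable_integral_norm_mul_exp_neg_mul hc hr hr_sum)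

theorem integral_abs_tsum_mul_exp_neg_mul_le (hc : ∀ n, |c n| ≤ M) (hr : ∀ n, 0 < r n)
    (hr_sum : Summable fun n ↦ 1 / r n) :
    ∫ t in Ioi (0 : ℝ), |∑' n, c n * Real.exp (-r n * t)| ≤ M * ∑' n, 1 / r n := by
  have h_sum := summable_integral_norm_mul_exp_neg_mul hc hr hr_sum
  calc ∫ t in Ioi (0 : ℝ), |∑' n, c n * Real.exp (-r n * t)|
      ≤ ∑' n, ∫ t in Ioi (0 : ℝ), ‖c n * Real.exp (-r n * t)‖ :=
        integral_norm_tsum_le_tsum_integral_norm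
          (fun n ↦ integrableOn_mul_exp_neg_mul (c n) (hr n)) h_sum
    _ ≤ ∑' n, M * (1 / r n) :=
        h_sum.tsum_le_tsum (fun n ↦ integral_norm_mul_exp_neg_mul_le (hc n) (hr n))
          (hr_sum.mul_left M)
    _ = M * ∑' n, 1 / r n := tsum_mul_left

end ExpSeries

theorem summable_one_div_sq_mul_add {c a : ℝ} (hc : 0 < c) (ha : -c < a) :
    Summable fun n : ℕ ↦ 1 / (((n : ℝ) + 1) ^ 2 * c + a) := by
  set m := min c (c + a)
  have hm : 0 < m := lt_min hc (by linarith)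
  have h_le (n : ℕ) : ((n : ℝ) + 1) ^ 2 * m ≤ ((n : ℝ) + 1) ^ 2 * c + a := by
    have h1 : 1 ≤ ((n : ℝ) + 1) ^ 2 := one_le_pow₀ (le_add_of_nonneg_left n.cast_nonneg)
    rcases le_total a 0 with ha0 | ha0
    · nlinarith [min_le_right c (c + a)]
    · nlinarith [min_le_left c (c + a)]
  have h_sq : Summable fun n : ℕ ↦ 1 / ((n : ℝ) + 1) ^ 2 := by
    simpa only [Nat.cast_add, Nat.cast_one] using
      (summable_nat_add_iff 1).2 (Real.summable_one_div_nat_pow.2 one_lt_two)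
  refine (h_sq.div_const m).of_nonneg_of_le (fun n ↦ ?_) fun n ↦ ?_
  · exact one_div_nonneg.2 ((by positivity : 0 ≤ ((n : ℝ) + 1) ^ 2 * m).trans (h_le n))
  · rw [div_div]
    exact one_div_le_one_div_of_le (by positivity) (h_le n)

theorem abs_le_iSup_abs_of_continuousOn {X : Type*} [TopologicalSpace X] {f : X → ℝ} {s : Set X}
    (hs : IsCompact s) (hf : ContinuousOn f s) {y : X} (hy : y ∈ s) :
    |f y| ≤ ⨆ z : s, |f z| := by
  have h_bdd := (hs.image_of_continuousOn hf.abs).bddAbove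
  rw [image_eq_range] at h_bdd
  exact le_ciSup h_bdd ⟨y, hy⟩

theorem abs_intervalIntegral_mul_sin_le {f : ℝ → ℝ} {a b M : ℝ} (hab : a ≤ b)
    (hM : ∀ y ∈ Icc a b, |f y| ≤ M) (k : ℝ) :
    |∫ y in a..b, f y * Real.sin (k * y)| ≤ M * (b - a) := by
  have h := intervalIntegral.norm_integral_le_of_norm_le_const (a := a) (b := b) (C := M)
    (f := fun y ↦ f y * Real.sin (k * y)) fun y hy ↦ by
      rw [uIoc_of_le hab] at hy
      rw [norm_mul, Real.norm_eq_abs, Real.norm_eq_abs]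
      exact (mul_le_of_le_one_right (abs_nonneg _) (Real.abs_sin_le_one _)).trans
        (hM y (Ioc_subset_Icc_self hy))
  rwa [Real.norm_eq_abs, abs_of_nonneg (sub_nonneg.2 hab)] at h

theorem abs_integral_mul_sin_mul_sin_le_iSup {f : ℝ → ℝ} (hf : ContinuousOn f (Icc 0 1))
    (k x : ℝ) :
    |(∫ y in (0:ℝ)..1, f y * Real.sin (k * y)) * Real.sin (k * x)| ≤ ⨆ y : Icc (0 : ℝ) 1, |f y| := by
  have h_int := abs_intervalIntegral_mul_sin_le zero_le_one
    (fun y hy ↦ abs_le_iSup_abs_of_continuousOn isCompact_Icc hf hy) k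
  rw [sub_zero, mul_one] at h_int
  rw [abs_mul]
  exact (mul_le_of_le_one_right (abs_nonneg _) (Real.abs_sin_le_one _)).trans h_int

theorem exp_mul_u1 (f : ℝ → ℝ) (a x t : ℝ) :
    Real.exp (-a * t) * u1 f x t =
      2 * ∑' n : ℕ, ((∫ y in (0:ℝ)..1, f y * Real.sin (((n : ℝ) + 1) * π * y)) *
        Real.sin (((n : ℝ) + 1) * π * x)) * Real.exp (-(((n : ℝ) + 1) ^ 2 * π ^ 2 + a) * t) := by
  rw [u1, mul_left_comm, ← tsum_mul_left]
  refine congrArg _ (tsum_congr fun n ↦ ?_)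
  rw [show -(((n : ℝ) + 1) ^ 2 * π ^ 2 + a) * t = -a * t + -(((n : ℝ) + 1) ^ 2) * π ^ 2 * t by ring,
    Real.exp_add]
  ring

/-- If `f : [0,1] → ℝ` is continuous and `a > −π²`, then for every
`x ∈ [0,1]` the function `t ↦ e^{−a t} u1 f x t` is Lebesgue integrable on `[0,∞)`,
and the constant `C = 2 ‖f‖_∞ Σ_{n=1}^∞ 1/(n²π² + a)` (independent of `x`) bounds
`∫_0^∞ e^{−a t} |u1 f x t| dt` uniformly in `x ∈ [0,1]`. -/
theorem u1_exp_weight_integrable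
    (f : ℝ → ℝ) (hf : ContinuousOn f (Set.Icc 0 1))
    (a : ℝ) (ha : -π ^ 2 < a) :
    ∀ x ∈ Set.Icc (0 : ℝ) 1,
      IntegrableOn (fun t : ℝ => Real.exp (-a * t) * u1 f x t) (Set.Ici 0) ∧
        ∫ t in Set.Ici (0 : ℝ), Real.exp (-a * t) * |u1 f x t|
          ≤ 2 * (⨆ y : Set.Icc (0 : ℝ) 1, |f y|) *
              ∑' n : ℕ, 1 / (((n : ℝ) + 1) ^ 2 * π ^ 2 + a) := by
  intro x _
  have h_coeff (n : ℕ) := abs_integral_mul_sin_mul_sin_le_iSup hf (((n : ℝ) + 1) * π) x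
  have h_rate (n : ℕ) : 0 < ((n : ℝ) + 1) ^ 2 * π ^ 2 + a := by
    have : π ^ 2 ≤ ((n : ℝ) + 1) ^ 2 * π ^ 2 :=
      le_mul_of_one_le_left (by positivity) (one_le_pow₀ (le_add_of_nonneg_left n.cast_nonneg))
    linarith
  have h_sum := summable_one_div_sq_mul_add (by positivity) ha
  have h_abs (t : ℝ) : Real.exp (-a * t) * |u1 f x t| = 2 * |∑' n : ℕ,
      ((∫ y in (0:ℝ)..1, f y * Real.sin (((n : ℝ) + 1) * π * y)) *
        Real.sin (((n : ℝ) + 1) * π * x)) * Real.exp (-(((n : ℝ) + 1) ^ 2 * π ^ 2 + a) * t)| := by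
    rw [← abs_of_pos (Real.exp_pos (-a * t)), ← abs_mul, exp_mul_u1, abs_mul, abs_two]
  constructor
  · rw [integrableOn_Ici_iff_integrableOn_Ioi, funext (exp_mul_u1 f a x)]
    exact (integrableOn_tsum_mul_exp_neg_mul h_coeff h_rate h_sum).const_mul 2
  · rw [integral_Ici_eq_integral_Ioi, funext h_abs, integral_const_mul, mul_assoc]
    gcongr
    exact integral_abs_tsum_mul_exp_neg_mul_le h_coeff h_rate h_sum
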